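/- For the curvature quotient f_{n,k} with 1 ≤ k < n, the quantity μ_∞ := liminf over A → ∞ within the level set {f_{n,k} = 1} of Σᵢ ∂_i f_{n,k}(A) satisfies μ_∞ = (n/k)^{1/(n-k)} > 1. In particular, for A = (λ, …, λ, t) on the unit level set with t → ∞, the sum of partial derivatives tends to (n/k)^{1/(n-k)}. -/

import Mathlib

open Filter Topology

/-- The `k`-th elementary symmetric polynomial in `m` real variables. -/
def esymm (m k : ℕ) (x : Fin m → ℝ) : ℝ :=
  ∑ s ∈ Finset.univ.powersetCard k, ∏ i ∈ s, x i

/-- The curvature quotient `f_{m,k} = c_{m,k} (σ_m/σ_k)^{1/(m-k)}`,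
with `c_{m,k} = C(m,k)^{1/(m-k)}`. -/
noncomputable def fnk (m k : ℕ) (x : Fin m → ℝ) : ℝ :=
  (m.choose k : ℝ) ^ ((1 : ℝ) / ((m : ℝ) - (k : ℝ))) *
    (esymm m m x / esymm m k x) ^ ((1 : ℝ) / ((m : ℝ) - (k : ℝ)))

/-!
On the diagonal curve `x = (u, …, u, v)` one has `σ_{n+1}(x) = u^n v` and
`σ_k(x) = u^(k-1) (a u + b v)` with `a = C(n,k)`, `b = C(n,k-1)`, so that
`f_{n+1,k}(x) = u (C v / (a u + b v))^p` with `C = C(n+1,k)` and `p = 1/(n+1-k)`.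
The sum of the partial derivatives is the derivative in the direction `(1, …, 1)`, which keeps
`x` on this curve; on the level set `f = 1` it equals `1/u + p (1/v - (a + b)/(a u + b v))`.
The level set is `C u^(n+1-k) v = a u + b v`; by the intermediate value theorem it contains points
with `u ∈ [c, 2c]` for all large `v`, where `C c^(n+1-k) = b`, i.e. `c^(n+1-k) = k/(n+1)`.
Along them `u → c`, so the sum tends to `1/c = ((n+1)/k)^p`.
-/

theorem Fin.univ_val_map_snoc {α : Type*} {m : ℕ} (x : Fin m → α) (y : α) :
    Finset.univ.val.map (Fin.snoc x y : Fin (m + 1) → α) = y ::ₘ Finset.univ.val.map x := by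
  rw [Fin.univ_val_map, Fin.univ_val_map, List.ofFn_succ', Fin.snoc_last, List.concat_eq_append,
    Multiset.cons_coe, Multiset.coe_eq_coe]
  simp [List.perm_append_singleton]

theorem Multiset.esymm_cons_succ {R : Type*} [CommSemiring R] (s : Multiset R) (a : R) (j : ℕ) :
    (a ::ₘ s).esymm (j + 1) = s.esymm (j + 1) + a * s.esymm j := by
  simp [Multiset.esymm, Multiset.powersetCard_cons, Multiset.sum_map_mul_left]

theorem esymm_eq_multiset_esymm (m k : ℕ) (x : Fin m → ℝ) :
    esymm m k x = (Finset.univ.val.map x).esymm k :=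
  (Finset.esymm_map_val x _ k).symm

theorem esymm_snoc (m j : ℕ) (x : Fin m → ℝ) (y : ℝ) :
    esymm (m + 1) (j + 1) (Fin.snoc x y) = esymm m (j + 1) x + y * esymm m j x := by
  simp only [esymm_eq_multiset_esymm, Fin.univ_val_map_snoc, Multiset.esymm_cons_succ]

theorem esymm_const (m j : ℕ) (u : ℝ) : esymm m j (fun _ => u) = m.choose j * u ^ j := by
  rw [esymm, Finset.sum_congr rfl fun s hs => by
      rw [Finset.prod_const, (Finset.mem_powersetCard.1 hs).2],
    Finset.sum_const, Finset.card_powersetCard, Finset.card_univ, Fintype.card_fin, nsmul_eq_mul]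

theorem esymm_pos {m k : ℕ} (hk : k ≤ m) {x : Fin m → ℝ} (hx : ∀ i, 0 < x i) :
    0 < esymm m k x :=
  Finset.sum_pos (fun _ _ => Finset.prod_pos fun i _ => hx i)
    (Finset.powersetCard_nonempty.2 (by simpa using hk))

theorem differentiable_esymm (m k : ℕ) : Differentiable ℝ (esymm m k) := by
  unfold esymm
  fun_prop

theorem differentiableAt_fnk {m k : ℕ} (hk : k ≤ m) {x : Fin m → ℝ} (hx : ∀ i, 0 < x i) :
    DifferentiableAt ℝ (fnk m k) x := by
  have hdm := differentiable_esymm m m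
  have hdk := differentiable_esymm m k
  have hσk := esymm_pos hk hx
  have hσm := esymm_pos le_rfl hx
  unfold fnk
  fun_prop (disch := positivity)

theorem fnk_snoc_const {n k : ℕ} (hk : 1 ≤ k) (hkn : k ≤ n) {u v : ℝ} (hu : 0 < u) (hv : 0 < v) :
    fnk (n + 1) k (Fin.snoc (fun _ => u) v) =
      u * ((n + 1).choose k * v / (n.choose k * u + n.choose (k - 1) * v)) ^
        (1 / ((n : ℝ) + 1 - k)) := by
  obtain ⟨j, rfl⟩ : ∃ j, k = j + 1 := ⟨k - 1, by omega⟩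
  obtain ⟨N, rfl⟩ : ∃ N, n = j + N := ⟨n - j, by omega⟩
  have hN : N ≠ 0 := by omega
  have hb : 0 < ((j + N).choose j : ℝ) := by exact_mod_cast Nat.choose_pos (by omega)
  have hW : 0 ≤ v / ((j + N).choose (j + 1) * u + (j + N).choose j * v) := by positivity
  have hσ : esymm (j + N + 1) (j + N + 1) (Fin.snoc (fun _ => u) v) /
      esymm (j + N + 1) (j + 1) (Fin.snoc (fun _ => u) v) =
        u ^ N * (v / ((j + N).choose (j + 1) * u + (j + N).choose j * v)) := by
    rw [esymm_snoc, esymm_snoc, esymm_const, esymm_const, esymm_const, esymm_const,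
      Nat.choose_succ_self, Nat.choose_self]
    field_simp
    ring
  have hexp : (1 : ℝ) / (((j + N + 1 : ℕ) : ℝ) - ((j + 1 : ℕ) : ℝ)) = (N : ℝ)⁻¹ := by
    push_cast; ring
  have hexp' : (1 : ℝ) / (((j + N : ℕ) : ℝ) + 1 - ((j + 1 : ℕ) : ℝ)) = (N : ℝ)⁻¹ := by
    push_cast; ring
  rw [fnk, hσ, hexp, hexp', Real.mul_rpow (by positivity) hW, Real.pow_rpow_inv_natCast hu.le hN,
    Nat.add_sub_cancel, mul_div_assoc, Real.mul_rpow (by positivity) hW]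
  ring

theorem fnk_snoc_const_eq_one {n k : ℕ} (hk : 1 ≤ k) (hkn : k ≤ n) {u v : ℝ} (hu : 0 < u)
    (hv : 0 < v)
    (h : (n + 1).choose k * u ^ (n + 1 - k) * v = n.choose k * u + n.choose (k - 1) * v) :
    fnk (n + 1) k (Fin.snoc (fun _ => u) v) = 1 := by
  have hexp : (1 : ℝ) / ((n : ℝ) + 1 - k) = ((n + 1 - k : ℕ) : ℝ)⁻¹ := by
    rw [Nat.cast_sub (by omega)]; push_cast; ring
  have hC : (0 : ℝ) < (n + 1).choose k := by exact_mod_cast Nat.choose_pos (by omega)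
  rw [fnk_snoc_const hk hkn hu hv, ← h, hexp,
    show (n + 1).choose k * v / ((n + 1).choose k * u ^ (n + 1 - k) * v) = (u ^ (n + 1 - k))⁻¹ by
      field_simp,
    Real.inv_rpow (by positivity), Real.pow_rpow_inv_natCast hu.le (by omega),
    mul_inv_cancel₀ hu.ne']

theorem sum_fderiv_pi_single {ι : Type*} [Fintype ι] [DecidableEq ι] {f : (ι → ℝ) → ℝ}
    {x : ι → ℝ} {d : ℝ} (hf : DifferentiableAt ℝ f x)
    (hd : HasDerivAt (fun s => f (x + fun _ => s)) d 0) :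
    ∑ i, fderiv ℝ f x (Pi.single i 1) = d := by
  have hline : HasDerivAt (fun s : ℝ => x + fun _ => s) (fun _ => 1) 0 :=
    (hasDerivAt_pi.2 fun _ => hasDerivAt_id 0).const_add x
  rw [← map_sum, Finset.univ_sum_single]
  exact (hf.hasFDerivAt.comp_hasDerivAt_of_eq 0 hline (by ext; simp)).unique hd

theorem hasDerivAt_diag_mul_rpow {a b C p u v : ℝ} (ha : 0 ≤ a) (hb : 0 < b) (hC : 0 < C)
    (hu : 0 < u) (hv : 0 < v) :
    HasDerivAt (fun s => (u + s) * (C * (v + s) / (a * (u + s) + b * (v + s))) ^ p)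
      (u * (C * v / (a * u + b * v)) ^ p * (u⁻¹ + p * (v⁻¹ - (a + b) / (a * u + b * v)))) 0 := by
  have hD : 0 < a * u + b * v := by positivity
  have hW : HasDerivAt (fun s => C * (v + s) / (a * (u + s) + b * (v + s)))
      ((C * (a * u + b * v) - C * v * (a + b)) / (a * u + b * v) ^ 2) 0 := by
    have h := (((hasDerivAt_id' (x := (0 : ℝ))).const_add v).const_mul C).fun_div
      ((((hasDerivAt_id' (x := (0 : ℝ))).const_add u).const_mul a).add
        (((hasDerivAt_id' (x := (0 : ℝ))).const_add v).const_mul b)) (by simpa using hD.ne')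
    simpa using h
  have h := ((hasDerivAt_id' (x := (0 : ℝ))).const_add u).fun_mul
    (hW.rpow_const (p := p) (Or.inl (by simp only [add_zero]; positivity)))
  refine h.congr_deriv ?_
  simp only [add_zero, one_mul]
  rw [Real.rpow_sub_one (by positivity)]
  field_simp

theorem snoc_const_add_const {m : ℕ} (u v s : ℝ) :
    (Fin.snoc (fun _ => u) v : Fin (m + 1) → ℝ) + (fun _ => s) =
      Fin.snoc (fun _ => u + s) (v + s) := by
  ext i
  induction i using Fin.lastCases <;> simp

theorem sum_fderiv_fnk_snoc_const {n k : ℕ} (hk : 1 ≤ k) (hkn : k ≤ n) {u v : ℝ} (hu : 0 < u)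
    (hv : 0 < v) :
    ∑ i, fderiv ℝ (fnk (n + 1) k) (Fin.snoc (fun _ => u) v) (Pi.single i 1) =
      fnk (n + 1) k (Fin.snoc (fun _ => u) v) *
        (u⁻¹ + 1 / ((n : ℝ) + 1 - k) * (v⁻¹ - (n.choose k + n.choose (k - 1)) /
          (n.choose k * u + n.choose (k - 1) * v))) := by
  have hx : ∀ i, 0 < (Fin.snoc (fun _ => u) v : Fin (n + 1) → ℝ) i := fun i => by
    induction i using Fin.lastCases <;> simp [hu, hv]
  refine sum_fderiv_pi_single (differentiableAt_fnk (by omega) hx) ?_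
  rw [fnk_snoc_const hk hkn hu hv]
  have hb : (0 : ℝ) < n.choose (k - 1) := by exact_mod_cast Nat.choose_pos (by omega)
  have hC : (0 : ℝ) < (n + 1).choose k := by exact_mod_cast Nat.choose_pos (by omega)
  refine (hasDerivAt_diag_mul_rpow (Nat.cast_nonneg _) hb hC hu hv).congr_of_eventuallyEq ?_
  filter_upwards [Ioi_mem_nhds (neg_lt_zero.2 (lt_min hu hv))] with s hs
  rw [snoc_const_add_const, fnk_snoc_const hk hkn (by linarith [min_le_left u v, hs.out])
    (by linarith [min_le_right u v, hs.out])]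

theorem exists_solution_curve_tendsto {a b c C : ℝ} {N : ℕ} (ha : 0 ≤ a) (hb : 0 < b) (hc : 0 < c)
    (hN : N ≠ 0) (hC : C * c ^ N = b) :
    ∃ l : ℝ → ℝ, (∀ᶠ t in atTop, 0 < l t ∧ C * l t ^ N * t = a * l t + b * t) ∧
      Tendsto l atTop (𝓝 c) := by
  have hC0 : 0 < C := pos_of_mul_pos_left (hC ▸ hb) (by positivity)
  have hroot : ∀ᶠ t in atTop, ∃ u, u ∈ Set.Icc c (2 * c) ∧ C * u ^ N * t = a * u + b * t := by
    filter_upwards [eventually_ge_atTop (2 * a * c / b)] with t ht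
    have hbt : 2 * a * c ≤ b * t := by rwa [div_le_iff₀' hb] at ht
    have h2N : (2 : ℝ) ≤ 2 ^ N := by
      simpa using pow_le_pow_right₀ one_le_two (Nat.one_le_iff_ne_zero.2 hN)
    have hG : ContinuousOn (fun u => C * u ^ N * t - (a * u + b * t)) (Set.Icc c (2 * c)) := by
      fun_prop
    have hleft : C * c ^ N * t - (a * c + b * t) = -(a * c) := by rw [hC]; ring
    have hright : C * (2 * c) ^ N * t - (a * (2 * c) + b * t) =
        (2 ^ N - 1) * (b * t) - 2 * a * c := by
      rw [mul_pow, mul_left_comm, hC]; ring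
    have hmem : (0 : ℝ) ∈ Set.Icc (C * c ^ N * t - (a * c + b * t))
        (C * (2 * c) ^ N * t - (a * (2 * c) + b * t)) := by
      rw [hleft, hright]
      constructor
      · linarith [mul_nonneg ha hc.le]
      · have hbt0 : 0 ≤ b * t := le_trans (by positivity) hbt
        nlinarith [mul_nonneg (sub_nonneg.2 h2N) hbt0]
    obtain ⟨u, hu, hGu⟩ := intermediate_value_Icc (by linarith) hG hmem
    exact ⟨u, hu, sub_eq_zero.1 hGu⟩
  obtain ⟨l, hl⟩ := hroot.choice
  refine ⟨l, hl.mono fun t h => ⟨hc.trans_le h.1.1, h.2⟩, ?_⟩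
  have hpow : Tendsto (fun t => l t ^ N) atTop (𝓝 (c ^ N)) := by
    have hup : Tendsto (fun t : ℝ => c ^ N + a * (2 * c) / C * t⁻¹) atTop (𝓝 (c ^ N)) := by
      simpa using (tendsto_inv_atTop_zero.const_mul (a * (2 * c) / C)).const_add (c ^ N)
    refine tendsto_of_tendsto_of_tendsto_of_le_of_le' tendsto_const_nhds hup ?_ ?_
    · filter_upwards [hl] with t h using pow_le_pow_left₀ hc.le h.1.1 N
    · filter_upwards [hl, eventually_gt_atTop 0] with t ⟨hu, heq⟩ ht
      have hlN : l t ^ N = c ^ N + a * l t / C * t⁻¹ := by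
        field_simp
        linear_combination heq - t * hC
      have hal : a * l t ≤ a * (2 * c) := mul_le_mul_of_nonneg_left hu.2 ha
      rw [hlN]
      gcongr
  have hroot_pow := hpow.rpow_const (p := (N : ℝ)⁻¹) (Or.inr (by positivity))
  rw [Real.pow_rpow_inv_natCast hc.le hN] at hroot_pow
  refine hroot_pow.congr' ?_
  filter_upwards [hl] with t h using Real.pow_rpow_inv_natCast (hc.le.trans h.1.1) hN

theorem choose_succ_mul_inv_rpow_pow {n k : ℕ} (hk : 1 ≤ k) (hkn : k ≤ n) :
    ((n + 1).choose k : ℝ) * ((((n : ℝ) + 1) / k) ^ (1 / ((n : ℝ) + 1 - k)))⁻¹ ^ (n + 1 - k) =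
      n.choose (k - 1) := by
  have hexp : (1 : ℝ) / ((n : ℝ) + 1 - k) = ((n + 1 - k : ℕ) : ℝ)⁻¹ := by
    rw [Nat.cast_sub (by omega)]; push_cast; ring
  have hk0 : (0 : ℝ) < k := by exact_mod_cast hk
  rw [inv_pow, hexp, Real.rpow_inv_natCast_pow (by positivity) (by omega), inv_div,
    mul_div_assoc', div_eq_iff (by positivity)]
  obtain ⟨j, rfl⟩ : ∃ j, k = j + 1 := ⟨k - 1, by omega⟩
  rw [Nat.add_sub_cancel, mul_comm _ ((n : ℝ) + 1)]
  exact_mod_cast (Nat.add_one_mul_choose_eq n j).symm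

/-- For the curvature quotient `f_{n+1,k}` (so `1 ≤ k ≤ n`), the quantity
`μ_∞ = ((n+1)/k)^{1/(n+1-k)}` exceeds `1`, and along the curve `(λ(t),…,λ(t),t)` in the
unit level set of `f_{n+1,k}`, the sum of the partial derivatives of `f_{n+1,k}` tends to
`((n+1)/k)^{1/(n+1-k)}` as `t → ∞`. -/
theorem curvature_quotient_mu_infinity (n k : ℕ) (hk1 : 1 ≤ k) (hkn : k ≤ n) :
    (1 : ℝ) < (((n : ℝ) + 1) / (k : ℝ)) ^ ((1 : ℝ) / ((n : ℝ) + 1 - (k : ℝ))) ∧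
      ∃ lam : ℝ → ℝ,
        (∀ᶠ t in atTop, 0 < lam t ∧
          fnk (n + 1) k (Fin.snoc (fun _ => lam t) t) = 1) ∧
        Tendsto
          (fun t : ℝ => ∑ i : Fin (n + 1),
            fderiv ℝ (fnk (n + 1) k) (Fin.snoc (fun _ => lam t) t) (Pi.single i 1))
          atTop
          (𝓝 ((((n : ℝ) + 1) / (k : ℝ)) ^ ((1 : ℝ) / ((n : ℝ) + 1 - (k : ℝ))))) := by
  set μ : ℝ := (((n : ℝ) + 1) / k) ^ (1 / ((n : ℝ) + 1 - k))
  have hk0 : (0 : ℝ) < k := by exact_mod_cast hk1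
  have hkn' : (k : ℝ) ≤ n := by exact_mod_cast hkn
  have hμ0 : 0 < μ := by positivity
  have hb : (0 : ℝ) < n.choose (k - 1) := by exact_mod_cast Nat.choose_pos (by omega)
  obtain ⟨lam, hlam, hlim⟩ := exists_solution_curve_tendsto (a := n.choose k) (by positivity) hb
    (inv_pos.2 hμ0) (by omega) (choose_succ_mul_inv_rpow_pow hk1 hkn)
  have hlevel : ∀ᶠ t in atTop,
      0 < t ∧ 0 < lam t ∧ fnk (n + 1) k (Fin.snoc (fun _ => lam t) t) = 1 := by
    filter_upwards [hlam, eventually_gt_atTop 0] with t ⟨hl, heq⟩ ht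
    exact ⟨ht, hl, fnk_snoc_const_eq_one hk1 hkn hl ht heq⟩
  refine ⟨Real.one_lt_rpow (by rw [one_lt_div hk0]; linarith) (one_div_pos.2 (by linarith)), lam,
    hlevel.mono fun t h => h.2, ?_⟩
  have hden : Tendsto (fun t => (n.choose k : ℝ) * lam t + n.choose (k - 1) * t) atTop atTop :=
    (hlim.const_mul _).add_atTop (tendsto_id.const_mul_atTop hb)
  have hlimit : Tendsto (fun t => (lam t)⁻¹ + 1 / ((n : ℝ) + 1 - k) *
      (t⁻¹ - (n.choose k + n.choose (k - 1)) / (n.choose k * lam t + n.choose (k - 1) * t)))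
      atTop (𝓝 μ) := by
    have hquot := (tendsto_const_nhds (x := (n.choose k + n.choose (k - 1) : ℝ))).div_atTop hden
    have h := (hlim.inv₀ (inv_pos.2 hμ0).ne').add
      ((tendsto_inv_atTop_zero.sub hquot).const_mul (1 / ((n : ℝ) + 1 - k)))
    rwa [inv_inv, sub_zero, mul_zero, add_zero] at h
  refine hlimit.congr' ?_
  filter_upwards [hlevel] with t ⟨ht, hl, hone⟩
  rw [sum_fderiv_fnk_snoc_const hk1 hkn hl ht, hone, one_mul]
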